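/- arXiv:1612.05827 — 3 statements merged into one kernel-verified Lean document; each statement's English description precedes it below -/
import Mathlib

section
/- Let a = (a_1,...,a_k) ∈ Part(n) with a_k − a_{k−1} ≤ 1 and k ≥ 3. Then b = (a_1, ..., a_{k−2}, a_{k−1} + a_k) is the partition immediately next to a in the lexicographic order: b > a, and every c ∈ Part(n) with c > a satisfies c ≥ b. -/
/-- A partition of `n` (in the sense of the paper): a non-decreasing list of
positive integers with at least two components summing to `n`. -/
def IsPartition (n : ℕ) (a : List ℕ) : Prop :=
  a.Pairwise (· ≤ ·) ∧ 2 ≤ a.length ∧ (∀ x ∈ a, 0 < x) ∧ a.sum = n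

/-- Lexicographic order on partitions. -/
def PartLT (a b : List ℕ) : Prop := List.Lex (· < ·) a b

lemma my_lex_append_left {r : ℕ → ℕ → Prop} (c : List ℕ) {l1 l2 : List ℕ}
    (h : List.Lex r l1 l2) : List.Lex r (c ++ l1) (c ++ l2) := by
  induction c with
  | nil => exact h
  | cons a c ih => exact List.Lex.cons ih

lemma my_lex_split {r : ℕ → ℕ → Prop} :
    ∀ (c : List ℕ) {l1 d : List ℕ}, List.Lex r (c ++ l1) d →
      (∃ e, d = c ++ e ∧ List.Lex r l1 e) ∨ (∀ l2, List.Lex r (c ++ l2) d) := by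
  intro c
  induction c with
  | nil => intro l1 d h; exact Or.inl ⟨d, rfl, h⟩
  | cons a c ih =>
    intro l1 d h
    cases h with
    | cons h' =>
      rcases ih h' with ⟨e, rfl, he⟩ | hall
      · exact Or.inl ⟨e, rfl, he⟩
      · exact Or.inr fun l2 => List.Lex.cons (hall l2)
    | rel hab => exact Or.inr fun l2 => List.Lex.rel hab

/-- if a = (a₁,…,a_{k-2},x,y) ∈ Part(n) with k ≥ 3 and y - x ≤ 1,
then b = (a₁,…,a_{k-2}, x + y) is the partition immediately next to a:
b > a and every c ∈ Part(n) with c > a satisfies c ≥ b. -/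
theorem merge_last_two_is_next (n : ℕ) (c : List ℕ) (x y : ℕ)
    (hc : c ≠ []) (ha : IsPartition n (c ++ [x, y])) (hxy : y ≤ x + 1) :
    PartLT (c ++ [x, y]) (c ++ [x + y]) ∧
      ∀ d : List ℕ, IsPartition n d → PartLT (c ++ [x, y]) d →
        d = c ++ [x + y] ∨ PartLT (c ++ [x + y]) d := by
  obtain ⟨hsort, hlen, hpos, hsum⟩ := ha
  have hx : 0 < x := hpos x (by simp)
  have hy : 0 < y := hpos y (by simp)
  have hxley : x ≤ y := by
    have := (List.pairwise_append.mp hsort).2.1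
    simp [List.pairwise_cons] at this
    exact this
  constructor
  · exact my_lex_append_left c (List.Lex.rel (by omega))
  · intro d hd hlt
    obtain ⟨hdsort, hdlen, hdpos, hdsum⟩ := hd
    rcases my_lex_split c hlt with ⟨e, rfl, he⟩ | hall
    · -- d = c ++ e
      have hesum : e.sum = x + y := by
        simp [List.sum_append] at hdsum hsum
        omega
      have hesort : e.Pairwise (· ≤ ·) := (List.pairwise_append.mp hdsort).2.1
      have hne : e ≠ [] := by
        intro h
        rw [h] at hesum
        simp at hesum
        omega
      obtain ⟨e1, t, rfl⟩ : ∃ e1 t, e = e1 :: t := by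
        cases e with
        | nil => exact absurd rfl hne
        | cons a b => exact ⟨a, b, rfl⟩
      cases he with
      | rel h1 =>
        -- x < e1
        cases t with
        | nil =>
          left
          have : e1 = x + y := by simpa using hesum
          simp [this]
        | cons t1 t' =>
          exfalso
          have ht1 : e1 ≤ t1 := by
            rcases List.pairwise_cons.mp hesort with ⟨h, _⟩
            exact h t1 (by simp)
          have : e1 + (t1 + t'.sum) = x + y := by simpa using hesum
          omega
      | cons h2 =>
        -- e = x :: t, h2 : Lex [y] t
        cases t with
        | nil => exact absurd h2 (by intro h; cases h)
        | cons t1 t' =>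
          cases h2 with
          | rel h3 =>
            -- y < t1
            exfalso
            have : x + (t1 + t'.sum) = x + y := by simpa using hesum
            omega
          | cons h3 =>
            -- t1 = y, h3 : Lex [] t'
            exfalso
            cases t' with
            | nil => cases h3
            | cons b l =>
              have hb : 0 < b := hdpos b (by simp)
              have : x + (y + (b + l.sum)) = x + y := by simpa using hesum
              omega
    · exact Or.inr (hall [x + y])
end

section
/- Let a = (a_1,...,a_k) ∈ Part(n) with a_k − a_{k−1} > 1. Set b_{k−1} = a_{k−1} + 1 and b_k = a_k − 1, write b_k = q·b_{k−1} + r with 0 ≤ r < b_{k−1}, and suppose q = 1. Then b = (a_1,...,a_{k−2}, a_{k−1}+1, a_k−1) is the partition immediately next to a in Part(n) under the lexicographic order. -/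
lemma lex_append_left (c : List ℕ) {l l' : List ℕ}
    (h : List.Lex (· < ·) l l') : List.Lex (· < ·) (c ++ l) (c ++ l') := by
  induction c with
  | nil => simpa using h
  | cons e c ih => exact List.Lex.cons ih

lemma aux_min (x y : ℕ) (hxy : x + 1 < y) (h2 : y - 1 < (x + 1) * 2) :
    ∀ c d : List ℕ, d.Pairwise (· ≤ ·) → (∀ z ∈ d, 0 < z) →
      d.sum = (c ++ [x, y]).sum → List.Lex (· < ·) (c ++ [x, y]) d →
      d = c ++ [x + 1, y - 1] ∨ List.Lex (· < ·) (c ++ [x + 1, y - 1]) d := by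
  intro c
  induction c with
  | nil =>
    intro d hs hp hsum hlex
    simp only [List.nil_append] at *
    cases hlex with
    | cons h1 =>
      -- d = x :: t, Lex [y] t
      rename_i t
      cases h1 with
      | cons h2 =>
        -- t = y :: s, Lex [] s
        rename_i s
        cases h2 with
        | nil =>
          rename_i u s'
          exfalso
          simp [List.sum_cons] at hsum
          have hu : 0 < u := hp u (by simp)
          omega
      | rel h2 =>
        rename_i v s
        exfalso
        simp [List.sum_cons] at hsum
        omega
    | rel h1 =>
      rename_i w t
      rcases eq_or_lt_of_le (Nat.succ_le_of_lt h1) with hw | hw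
      · -- w = x + 1
        subst hw
        have hts : t.sum = y - 1 := by
          simp [List.sum_cons] at hsum; omega
        match t with
        | [] => exfalso; simp at hts; omega
        | [u] =>
          left
          simp at hts
          simp [hts]
        | u :: v :: s =>
          exfalso
          have hsd := hs
          rw [List.pairwise_cons] at hsd
          have hu : x + 1 ≤ u := hsd.1 u (by simp)
          have hv : x + 1 ≤ v := hsd.1 v (by simp)
          simp [List.sum_cons] at hts
          omega
      · right
        exact List.Lex.rel hw
  | cons e c ih =>
    intro d hs hp hsum hlex
    cases hlex with
    | cons h1 =>
      rename_i t
      rw [List.pairwise_cons] at hs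
      have := ih t hs.2 (fun z hz => hp z (by simp [hz]))
        (by simp [List.sum_cons] at hsum ⊢; omega) h1
      rcases this with h | h
      · left; rw [h]; simp
      · right; exact List.Lex.cons h
    | rel h1 =>
      right
      exact List.Lex.rel h1

/-- if a = (a₁,…,a_{k-2},x,y) ∈ Part(n) with y - x > 1 and the
quotient of (y - 1) by (x + 1) equals 1, then b = (a₁,…,a_{k-2}, x+1, y-1)
is the partition immediately next to a in Part(n). -/
theorem next_partition_case_q_eq_one (n : ℕ) (c : List ℕ) (x y : ℕ)
    (ha : IsPartition n (c ++ [x, y])) (hxy : x + 1 < y)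
    (hq : (y - 1) / (x + 1) = 1) :
    PartLT (c ++ [x, y]) (c ++ [x + 1, y - 1]) ∧
      IsPartition n (c ++ [x + 1, y - 1]) ∧
      ∀ d : List ℕ, IsPartition n d → PartLT (c ++ [x, y]) d →
        d = c ++ [x + 1, y - 1] ∨ PartLT (c ++ [x + 1, y - 1]) d := by
  obtain ⟨hsort, hlen, hpos, hsum⟩ := ha
  have h2 : y - 1 < (x + 1) * 2 := by
    by_contra h
    push_neg at h
    have : 2 ≤ (y - 1) / (x + 1) := (Nat.le_div_iff_mul_le (by omega)).2 (by omega)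
    omega
  refine ⟨?_, ⟨?_, ?_, ?_, ?_⟩, ?_⟩
  · exact lex_append_left c (List.Lex.rel (by omega))
  · rw [List.pairwise_append] at hsort ⊢
    refine ⟨hsort.1, by simp; omega, ?_⟩
    intro a ha b hb
    have := hsort.2.2 a ha x (by simp)
    simp at hb
    omega
  · rw [List.length_append] at hlen ⊢; simp
  · intro z hz
    simp at hz
    rcases hz with hz | hz | hz
    · exact hpos z (by simp [hz])
    · omega
    · omega
  · rw [List.sum_append] at hsum ⊢; simp at hsum ⊢; omega
  · intro d hd hlex
    exact aux_min x y hxy h2 c d hd.1 hd.2.2.1 (by rw [hsum, hd.2.2.2]) hlex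
end

section
/- Let a = (a_1,...,a_k) ∈ Part(n) with a_k − a_{k−1} > 1. Set s = a_{k−1} + 1, write a_k − 1 = q·s + r with 0 ≤ r < s, and suppose q > 1. Then the sequence b' = (a_1,...,a_{k−2}, s, s, ..., s, s + r), where s appears q times before the last component s + r, is a partition of n and is the partition immediately next to a in Part(n) under the lexicographic order. -/
/-! Write `a = c ++ [x, y]`. A partition `d > a` either already exceeds `c ++ e` within its
first `|c|` entries, for every `e`, or has the form `c ++ t` with `t > [x, y]`. In the latter
case the sum of `t` forbids `t` to start with `x`, so all entries of `t` are at least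
`s = x + 1`. Among lists with entries `≥ s` and sum `x + y = q s + (s + r)`, the
lexicographically least one greedily takes the entry `s` as long as possible: `q` copies
of `s`, then `s + r < 2 s`, which cannot be split further. -/

theorem lex_append_left_cases {α : Type*} {r : α → α → Prop} (c : List α) {a d : List α}
    (h : List.Lex r (c ++ a) d) :
    (∃ t, d = c ++ t ∧ List.Lex r a t) ∨ ∀ e, List.Lex r (c ++ e) d := by
  induction c generalizing d with
  | nil => exact Or.inl ⟨d, rfl, h⟩
  | cons z c ih =>
    cases h with
    | cons h =>
      rcases ih h with ⟨t, rfl, ht⟩ | hall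
      · exact Or.inl ⟨t, rfl, ht⟩
      · exact Or.inr fun _ => .cons (hall _)
    | rel h => exact Or.inr fun _ => .rel h

theorem pairwise_le_replicate_append_singleton {α : Type*} [Preorder α] {s t : α} (m : ℕ)
    (hst : s ≤ t) : (List.replicate m s ++ [t]).Pairwise (· ≤ ·) := by
  simp [List.pairwise_append, List.pairwise_replicate, hst]

theorem replicate_append_singleton_lex_le {s r : ℕ} (hr : r < s) (m : ℕ) {t : List ℕ}
    (ht : ∀ z ∈ t, s ≤ z) (hsum : t.sum = m * s + (s + r)) :
    t = List.replicate m s ++ [s + r] ∨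
      List.Lex (· < ·) (List.replicate m s ++ [s + r]) t := by
  induction m generalizing t with
  | zero =>
    left
    match t, ht, hsum with
    | [], _, hsum => rw [List.sum_nil] at hsum; omega
    | [z], _, hsum => simpa using hsum
    | z :: z' :: t, ht, hsum =>
      have := ht z (by simp)
      have := ht z' (by simp)
      simp only [List.sum_cons] at hsum
      omega
  | succ m ih =>
    obtain _ | ⟨z, t⟩ := t
    · rw [List.sum_nil] at hsum; omega
    rcases (ht z (by simp)).eq_or_lt with rfl | hlt
    · have hsum' : t.sum = m * s + (s + r) := by
        rw [List.sum_cons, Nat.succ_mul] at hsum; omega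
      rcases ih (fun w hw => ht w (by simp [hw])) hsum' with rfl | hlex
      · exact Or.inl rfl
      · exact Or.inr (.cons hlex)
    · exact Or.inr (.rel hlt)

theorem lt_of_mem_of_pair_lex {x y : ℕ} {t : List ℕ} (hsorted : t.Pairwise (· ≤ ·))
    (hpos : ∀ z ∈ t, 0 < z) (hsum : t.sum = x + y) (hlex : List.Lex (· < ·) [x, y] t) :
    ∀ z ∈ t, x < z := by
  cases hlex with
  | rel hlt =>
    intro z hz
    rcases List.mem_cons.1 hz with rfl | hz
    · exact hlt
    · exact hlt.trans_le (List.rel_of_pairwise_cons hsorted hz)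
  | cons hlex =>
    exfalso
    cases hlex with
    | rel hlt => simp only [List.sum_cons] at hsum; omega
    | cons hlex =>
      cases hlex with
      | nil => simp only [List.mem_cons, forall_eq_or_imp, List.sum_cons] at hpos hsum; omega

theorem IsPartition.append_of_lt_of_sum_eq {n x y : ℕ} {c u : List ℕ}
    (ha : IsPartition n (c ++ [x, y])) (hu : u.Pairwise (· ≤ ·)) (hlen : 2 ≤ u.length)
    (hx : ∀ z ∈ u, x < z) (hsum : u.sum = x + y) : IsPartition n (c ++ u) := by
  obtain ⟨hsorted, -, hpos, hsum_a⟩ := ha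
  obtain ⟨hc_sorted, -, hc_le⟩ := List.pairwise_append.1 hsorted
  refine ⟨List.pairwise_append.2 ⟨hc_sorted, hu, fun a ha b hb => ?_⟩,
    by rw [List.length_append]; omega, fun z hz => ?_,
    by simp only [List.sum_append, List.sum_cons, List.sum_nil] at hsum_a ⊢; omega⟩
  · exact (hc_le a ha x (by simp)).trans (hx b hb).le
  · rcases List.mem_append.1 hz with hz | hz
    · exact hpos z (by simp [hz])
    · exact (hx z hz).pos

theorem IsPartition.eq_or_lex_of_lex_append_pair {n x y q r : ℕ} {c d : List ℕ}
    (hr : r < x + 1) (hxy : x + y = q * (x + 1) + (x + 1 + r))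
    (ha : IsPartition n (c ++ [x, y])) (hd : IsPartition n d)
    (hlt : List.Lex (· < ·) (c ++ [x, y]) d) :
    d = c ++ (List.replicate q (x + 1) ++ [x + 1 + r]) ∨
      List.Lex (· < ·) (c ++ (List.replicate q (x + 1) ++ [x + 1 + r])) d := by
  rcases lex_append_left_cases c hlt with ⟨t, rfl, ht⟩ | hall
  · obtain ⟨hd_sorted, -, hd_pos, hd_sum⟩ := hd
    have hsum : t.sum = x + y := by
      simp only [List.sum_append, ← ha.2.2.2, List.sum_cons, List.sum_nil] at hd_sum; omega
    have hx_lt : ∀ z ∈ t, x < z :=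
      lt_of_mem_of_pair_lex (List.pairwise_append.1 hd_sorted).2.1
        (fun z hz => hd_pos z (by simp [hz])) hsum ht
    rcases replicate_append_singleton_lex_le hr q hx_lt (hsum.trans hxy) with rfl | h
    · exact Or.inl rfl
    · exact Or.inr (h.append_left _ c)
  · exact Or.inr (hall _)

theorem next_partition_case_q_gt_one_general (n : ℕ) (c : List ℕ) (x y : ℕ)
    (ha : IsPartition n (c ++ [x, y]))
    (hq : 1 < (y - 1) / (x + 1)) :
    IsPartition n
      (c ++ List.replicate ((y - 1) / (x + 1)) (x + 1) ++ [(x + 1) + (y - 1) % (x + 1)]) ∧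
    PartLT (c ++ [x, y])
      (c ++ List.replicate ((y - 1) / (x + 1)) (x + 1) ++ [(x + 1) + (y - 1) % (x + 1)]) ∧
    ∀ d : List ℕ, IsPartition n d → PartLT (c ++ [x, y]) d →
      d = c ++ List.replicate ((y - 1) / (x + 1)) (x + 1) ++ [(x + 1) + (y - 1) % (x + 1)] ∨
      PartLT (c ++ List.replicate ((y - 1) / (x + 1)) (x + 1) ++ [(x + 1) + (y - 1) % (x + 1)]) d := by
  set s := x + 1
  set q := (y - 1) / s
  set r := (y - 1) % s
  have hr : r < s := Nat.mod_lt _ (by omega)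
  have hxy : x + y = q * s + (s + r) := by
    have hdiv : q * s + r = y - 1 := Nat.div_add_mod' (y - 1) s
    have hy : 0 < y - 1 := Nat.pos_of_div_pos (by omega : 0 < q)
    omega
  have hu : List.replicate q s ++ [s + r] = s :: (List.replicate (q - 1) s ++ [s + r]) := by
    rw [← List.cons_append, ← List.replicate_succ, Nat.sub_add_cancel (by omega)]
  have hu_gt : ∀ z ∈ List.replicate q s ++ [s + r], x < z := by
    simp only [List.mem_append, List.mem_replicate, List.mem_singleton]
    rintro z (⟨-, rfl⟩ | rfl) <;> omega
  simp only [PartLT, List.append_assoc]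
  refine ⟨ha.append_of_lt_of_sum_eq (pairwise_le_replicate_append_singleton q (by omega))
      (by simp only [List.length_append, List.length_replicate, List.length_singleton]; omega)
      hu_gt (by simpa using hxy.symm), ?_,
    fun d hd hlt => ha.eq_or_lex_of_lex_append_pair hr hxy hd hlt⟩
  rw [hu]
  exact (List.Lex.rel (Nat.lt_succ_self x)).append_left _ c

/-- if a = (a₁,…,a_{k-2},x,y) ∈ Part(n) with y - x > 1, s = x+1,
y - 1 = q·s + r with 0 ≤ r < s and q > 1, then
b' = (a₁,…,a_{k-2}, s,…,s, s + r), with s appearing q times, is a partition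
of n and is the partition immediately next to a in Part(n). -/
theorem next_partition_case_q_gt_one (n : ℕ) (c : List ℕ) (x y : ℕ)
    (ha : IsPartition n (c ++ [x, y])) (hxy : x + 1 < y)
    (hq : 1 < (y - 1) / (x + 1)) :
    IsPartition n
      (c ++ List.replicate ((y - 1) / (x + 1)) (x + 1) ++ [(x + 1) + (y - 1) % (x + 1)]) ∧
    PartLT (c ++ [x, y])
      (c ++ List.replicate ((y - 1) / (x + 1)) (x + 1) ++ [(x + 1) + (y - 1) % (x + 1)]) ∧
    ∀ d : List ℕ, IsPartition n d → PartLT (c ++ [x, y]) d →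
      d = c ++ List.replicate ((y - 1) / (x + 1)) (x + 1) ++ [(x + 1) + (y - 1) % (x + 1)] ∨
      PartLT (c ++ List.replicate ((y - 1) / (x + 1)) (x + 1) ++ [(x + 1) + (y - 1) % (x + 1)]) d :=
  next_partition_case_q_gt_one_general n c x y ha hq
end
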